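/- Let a(n) satisfy a(0)=3, a(1)=0, a(2)=−4, a(n)=−2a(n-2)−2a(n-3) for n ≥ 3. Then for every i ≥ 2, 2^i divides a(2^i). -/

import Mathlib

/-!
Write `a n = tr (Mⁿ)` for the companion matrix `M` of `X³ + 2X + 2`. For a `3 × 3` matrix `A`
with trace `t`, sum of principal `2 × 2` minors `s` and determinant `d`, squaring gives
`tr (A²) = t² - 2s` and `s (A²) = s² - 2td`. Hence if `2^k` (with `k ≥ 1`) divides both `t` and
`s`, then `2^(k+1)` divides both invariants of `A²`. Starting from `t = 0`, `s = 2` for `M`,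
repeated squaring gives `2^(i+1) ∣ tr (M^(2^i)) = a (2^i)`.
-/

namespace Matrix

variable {R : Type*} [CommRing R]

def principalMinorSum (A : Matrix (Fin 3) (Fin 3) R) : R :=
  (A 0 0 * A 1 1 - A 0 1 * A 1 0) + (A 0 0 * A 2 2 - A 0 2 * A 2 0) +
    (A 1 1 * A 2 2 - A 1 2 * A 2 1)

theorem trace_mul_self_fin_three (A : Matrix (Fin 3) (Fin 3) R) :
    (A * A).trace = A.trace ^ 2 - 2 * A.principalMinorSum := by
  simp only [trace, diag, mul_apply, Fin.sum_univ_three, principalMinorSum]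
  ring

theorem principalMinorSum_mul_self (A : Matrix (Fin 3) (Fin 3) R) :
    (A * A).principalMinorSum = A.principalMinorSum ^ 2 - 2 * A.trace * A.det := by
  simp only [principalMinorSum, trace, diag, mul_apply, Fin.sum_univ_three, det_fin_three]
  ring

theorem two_mul_dvd_trace_and_principalMinorSum_mul_self {A : Matrix (Fin 3) (Fin 3) R}
    {d : R} (hd : 2 ∣ d) (ht : d ∣ A.trace) (hs : d ∣ A.principalMinorSum) :
    2 * d ∣ (A * A).trace ∧ 2 * d ∣ (A * A).principalMinorSum := by
  obtain ⟨c, rfl⟩ := hd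
  obtain ⟨u, hu⟩ := ht
  obtain ⟨v, hv⟩ := hs
  rw [trace_mul_self_fin_three, principalMinorSum_mul_self, hu, hv]
  exact ⟨⟨c * u ^ 2 - v, by ring⟩, ⟨c * v ^ 2 - u * A.det, by ring⟩⟩

theorem two_pow_succ_dvd_trace_pow_two_pow {A : Matrix (Fin 3) (Fin 3) R}
    (ht : 2 ∣ A.trace) (hs : 2 ∣ A.principalMinorSum) (i : ℕ) :
    2 ^ (i + 1) ∣ (A ^ 2 ^ i).trace ∧ 2 ^ (i + 1) ∣ (A ^ 2 ^ i).principalMinorSum := by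
  induction i with
  | zero => simpa using ⟨ht, hs⟩
  | succ i ih =>
    rw [pow_succ 2 i, pow_mul, sq, pow_succ']
    exact two_mul_dvd_trace_and_principalMinorSum_mul_self (dvd_pow_self 2 i.succ_ne_zero)
      ih.1 ih.2

end Matrix

open Matrix

def companion : Matrix (Fin 3) (Fin 3) ℤ := !![0, 1, 0; 0, 0, 1; -2, -2, 0]

theorem companion_pow_three : companion ^ 3 = (-2 : ℤ) • (companion + 1) := by
  ext i j
  fin_cases i <;> fin_cases j <;> simp [companion, pow_succ, mul_apply, Fin.sum_univ_three]

def recurrence : LinearRecurrence ℤ := ⟨3, ![-2, -2, 0]⟩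

theorem recurrence_isSolution_iff (u : ℕ → ℤ) :
    recurrence.IsSolution u ↔ ∀ n, u (n + 3) = -2 * u n - 2 * u (n + 1) := by
  refine forall_congr' fun n => ?_
  change u (n + 3) = ∑ i : Fin 3, ![-2, -2, 0] i * u (n + i) ↔ _
  simp [Fin.sum_univ_three, sub_eq_add_neg]

theorem recurrence_isSolution_trace_pow :
    recurrence.IsSolution fun n => (companion ^ n).trace := by
  rw [recurrence_isSolution_iff]
  intro n
  rw [pow_add, companion_pow_three, Matrix.mul_smul, mul_add, mul_one, ← pow_succ, trace_smul,
    trace_add, smul_eq_mul]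
  ring

theorem eq_trace_companion_pow {a : ℕ → ℤ} (h0 : a 0 = 3) (h1 : a 1 = 0) (h2 : a 2 = -4)
    (ha : recurrence.IsSolution a) : a = fun n => (companion ^ n).trace := by
  refine (recurrence.eq_iff_eqOn_range_order _ _ ha recurrence_isSolution_trace_pow).2 ?_
  intro n hn
  obtain rfl | rfl | rfl : n = 0 ∨ n = 1 ∨ n = 2 := by
    simp only [recurrence, Finset.coe_range, Set.mem_Iio] at hn
    omega
  all_goals simp [h0, h1, h2, companion, sq, trace, Fin.sum_univ_three]

theorem thm4_pseudoprimes (a : ℕ → ℤ)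
    (h0 : a 0 = 3) (h1 : a 1 = 0) (h2 : a 2 = -4)
    (hrec : ∀ n, 3 ≤ n → a n = -2 * a (n - 2) - 2 * a (n - 3)) :
    ∀ i : ℕ, 2 ≤ i → ((2 ^ i : ℕ) : ℤ) ∣ a (2 ^ i) := by
  have ha : recurrence.IsSolution a := by
    rw [recurrence_isSolution_iff]
    intro n
    rw [hrec (n + 3) (by omega), Nat.add_sub_cancel, show n + 3 - 2 = n + 1 by omega]
    ring
  intro i _
  have hdvd := (two_pow_succ_dvd_trace_pow_two_pow (A := companion)
    (by simp [companion, trace, Fin.sum_univ_three]) (by simp [companion, principalMinorSum]) i).1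
  rw [eq_trace_companion_pow h0 h1 h2 ha]
  push_cast
  exact (pow_dvd_pow 2 i.le_succ).trans hdvd
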